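/- arXiv:2102.01673 — 8 statements merged into one kernel-verified Lean document; each statement's English description precedes it below -/
import Mathlib

section
/- Let n ≥ 2 and let a_1, …, a_n be complex numbers with ∏_{i=1}^n a_i = 1, and let p(X) = ∏_{i=1}^n (X − a_i). Then 2·√(2/n)·log(M(p)) ≤ ℓ(p) ≤ 2·log(M(p)). -/
/-- **Mahler–Length bounds** (Theorem, inequality part).
For a monic polynomial `p(X) = ∏ (X - aᵢ)` with `∏ aᵢ = 1`, its Mahler measure is
`M(p) = ∏ max 1 |aᵢ|` and its translation length is `ℓ(p) = √(∑ 2 (log |aᵢ|)²)`.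
Then `2 √(2/n) log M(p) ≤ ℓ(p) ≤ 2 log M(p)`. -/
theorem stmt_0 (n : ℕ) (hn : 2 ≤ n) (a : Fin n → ℂ) (ha : ∏ i, a i = 1) :
    2 * Real.sqrt (2 / n) * Real.log (∏ i, max 1 (‖a i‖)) ≤
      Real.sqrt (∑ i, 2 * (Real.log (‖a i‖)) ^ 2) ∧
    Real.sqrt (∑ i, 2 * (Real.log (‖a i‖)) ^ 2) ≤
      2 * Real.log (∏ i, max 1 (‖a i‖)) := by
  have hane : ∀ i, ‖a i‖ ≠ 0 := by
    intro i
    simp only [ne_eq, norm_eq_zero]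
    intro hi
    rw [Finset.prod_eq_zero (Finset.mem_univ i) hi] at ha
    exact one_ne_zero ha.symm
  set x : Fin n → ℝ := fun i => Real.log (‖a i‖) with hxdef
  -- sum of logs is zero
  have hsum0 : ∑ i, x i = 0 := by
    rw [hxdef, ← Real.log_prod fun i _ => hane i, ← norm_prod, ha, norm_one, Real.log_one]
  -- log of Mahler measure is sum of positive parts
  have hlogM : Real.log (∏ i, max 1 (‖a i‖)) = ∑ i, max 0 (x i) := by
    rw [Real.log_prod (fun i _ => by positivity)]
    refine Finset.sum_congr rfl fun i _ => ?_
    rcases le_or_gt 1 (‖a i‖) with h | h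
    · rw [max_eq_right h, max_eq_right (Real.log_nonneg h)]
    · rw [max_eq_left h.le, Real.log_one, max_eq_left]
      exact Real.log_nonpos (by positivity) h.le
  set L : ℝ := ∑ i, max 0 (x i) with hLdef
  have hL0 : 0 ≤ L := Finset.sum_nonneg fun i _ => le_max_left _ _
  -- negative parts also sum to L
  have hneg : ∑ i, max 0 (-x i) = L := by
    have : ∀ i, max 0 (-x i) = max 0 (x i) - x i := by
      intro i
      rcases le_total 0 (x i) with h | h
      · rw [max_eq_left (by linarith), max_eq_right h]; ring
      · rw [max_eq_right (by linarith), max_eq_left h]; ring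
    rw [Finset.sum_congr rfl fun i _ => this i, Finset.sum_sub_distrib, hsum0, sub_zero]
  set S : ℝ := ∑ i, (x i) ^ 2 with hSdef
  have hS0 : 0 ≤ S := Finset.sum_nonneg fun i _ => sq_nonneg _
  -- sum of squares of nonneg reals ≤ square of sum
  have key : ∀ f : Fin n → ℝ, (∀ i, 0 ≤ f i) → ∑ i, (f i) ^ 2 ≤ (∑ i, f i) ^ 2 := by
    intro f hf
    calc ∑ i, (f i) ^ 2 ≤ ∑ i, f i * (∑ j, f j) := by
          refine Finset.sum_le_sum fun i _ => ?_
          rw [sq]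
          exact mul_le_mul_of_nonneg_left
            (Finset.single_le_sum (fun j _ => hf j) (Finset.mem_univ i)) (hf i)
      _ = (∑ i, f i) ^ 2 := by rw [← Finset.sum_mul, sq]
  -- S ≤ 2 L^2
  have hsq : ∀ i, (x i) ^ 2 = (max 0 (x i)) ^ 2 + (max 0 (-x i)) ^ 2 := by
    intro i
    rcases le_total 0 (x i) with h | h
    · rw [max_eq_right h, max_eq_left (by linarith)]; ring
    · rw [max_eq_left h, max_eq_right (by linarith)]; ring
  have hS2L : S ≤ 2 * L ^ 2 := by
    have h1 : ∑ i, (max 0 (x i)) ^ 2 ≤ L ^ 2 := key _ fun i => le_max_left _ _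
    have h2 : ∑ i, (max 0 (-x i)) ^ 2 ≤ L ^ 2 := by
      have := key (fun i => max 0 (-x i)) fun i => le_max_left _ _
      rwa [hneg] at this
    calc S = ∑ i, ((max 0 (x i)) ^ 2 + (max 0 (-x i)) ^ 2) :=
          Finset.sum_congr rfl fun i _ => hsq i
      _ = (∑ i, (max 0 (x i)) ^ 2) + ∑ i, (max 0 (-x i)) ^ 2 := Finset.sum_add_distrib
      _ ≤ 2 * L ^ 2 := by linarith
  -- Cauchy–Schwarz: 4 L^2 ≤ n S
  have hCS : 4 * L ^ 2 ≤ n * S := by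
    have h := sq_sum_le_card_mul_sum_sq (s := Finset.univ) (f := fun i => |x i|)
    have habs : ∑ i, |x i| = 2 * L := by
      have : ∀ i, |x i| = max 0 (x i) + max 0 (-x i) := by
        intro i
        rw [← max_zero_add_max_neg_zero_eq_abs_self, max_comm (x i) 0, max_comm (-x i) 0]
      rw [Finset.sum_congr rfl fun i _ => this i, Finset.sum_add_distrib, hneg]
      ring
    simp only [habs, sq_abs, Finset.card_univ, Fintype.card_fin] at h
    nlinarith [h]
  have hsum2 : ∑ i, 2 * (x i) ^ 2 = 2 * S := by rw [hSdef, Finset.mul_sum]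
  have hn0 : (0:ℝ) < n := by positivity
  rw [hlogM]
  constructor
  · rw [hsum2]
    have hLHS : 2 * Real.sqrt (2 / n) * L = Real.sqrt (8 * L ^ 2 / n) := by
      rw [show (8:ℝ) * L ^ 2 / n = (2 / n) * (2 * L) ^ 2 by field_simp; ring,
        Real.sqrt_mul (by positivity), Real.sqrt_sq (by positivity)]
      ring
    rw [hLHS]
    apply Real.sqrt_le_sqrt
    rw [div_le_iff₀ hn0]
    nlinarith
  · rw [hsum2]
    have : 2 * S ≤ (2 * L) ^ 2 := by nlinarith
    calc Real.sqrt (2 * S) ≤ Real.sqrt ((2 * L) ^ 2) := Real.sqrt_le_sqrt this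
      _ = 2 * L := Real.sqrt_sq (by positivity)
end

section
/- Let n ≥ 2 and let a_1, …, a_n be complex numbers with ∏_{i=1}^n a_i = 1, and let p(X) = ∏_{i=1}^n (X − a_i). Then ℓ(p) = 2·√(2/n)·log(M(p)) holds if and only if there exists a real number r > 0 such that for every i, either |a_i| = r or |a_i| = r^{-1}. -/
/-!
Put `x i = log |a i|`. Since `∏ a i = 1`, `∑ x i = 0`, so
`log M(p) = ∑ max 0 (x i) = ½ ∑ |x i|`. The identity `ℓ(p) = 2 √(2/n) log M(p)` therefore reads
`n ∑ |x i|² = (∑ |x i|)²`, the equality case of Cauchy–Schwarz against the constant vector,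
which holds exactly when all `|log |a i||` coincide.
-/

open Finset Real

section CauchySchwarz

variable {ι : Type*} [Fintype ι]

theorem sum_sum_sub_sq (y : ι → ℝ) :
    ∑ i, ∑ j, (y i - y j) ^ 2 = 2 * (Fintype.card ι * ∑ i, y i ^ 2 - (∑ i, y i) ^ 2) := by
  simp only [sub_sq, sum_add_distrib, sum_sub_distrib, sum_const, card_univ, nsmul_eq_mul,
    mul_assoc, ← mul_sum, ← sum_mul]
  ring

theorem card_mul_sum_sq_eq_sq_sum_iff (y : ι → ℝ) :
    Fintype.card ι * ∑ i, y i ^ 2 = (∑ i, y i) ^ 2 ↔ ∀ i j, y i = y j := by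
  rw [← sub_eq_zero, ← mul_eq_zero_iff_left two_ne_zero, ← sum_sum_sub_sq,
    sum_eq_zero_iff_of_nonneg fun _ _ => sum_nonneg fun _ _ => sq_nonneg _]
  simp only [sum_eq_zero_iff_of_nonneg fun _ _ => sq_nonneg _, mem_univ, true_imp_iff,
    sq_eq_zero_iff, sub_eq_zero]

theorem sqrt_sum_two_mul_sq_eq_iff (y : ι → ℝ) :
    √(∑ i, 2 * y i ^ 2) = √(2 / Fintype.card ι) * ∑ i, |y i| ↔ ∀ i j, |y i| = |y j| := by
  rcases isEmpty_or_nonempty ι with _ | _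
  · simp
  have hcard : (0 : ℝ) < Fintype.card ι := by exact_mod_cast Fintype.card_pos
  have hS : 0 ≤ ∑ i, |y i| := sum_nonneg fun i _ => abs_nonneg (y i)
  rw [← sqrt_sq hS, ← sqrt_mul (by positivity), sqrt_inj (by positivity) (by positivity),
    ← mul_sum, div_mul_eq_mul_div, eq_div_iff hcard.ne', ← card_mul_sum_sq_eq_sq_sum_iff]
  simp only [sq_abs]
  constructor <;> intro h <;> linarith

end CauchySchwarz

theorem Real.abs_log_eq_abs_log_iff {x r : ℝ} (hx : 0 < x) (hr : 0 < r) :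
    |log x| = |log r| ↔ x = r ∨ x = r⁻¹ := by
  rw [abs_eq_abs, ← log_inv, log_injOn_pos.eq_iff hx hr, log_injOn_pos.eq_iff hx (inv_pos.2 hr)]

theorem forall_abs_log_eq_iff_exists {ι : Type*} {x : ι → ℝ} (hx : ∀ i, 0 < x i) :
    (∀ i j, |log (x i)| = |log (x j)|) ↔ ∃ r, 0 < r ∧ ∀ i, x i = r ∨ x i = r⁻¹ := by
  constructor
  · intro h
    rcases isEmpty_or_nonempty ι with _ | ⟨⟨i₀⟩⟩
    · exact ⟨1, one_pos, isEmptyElim⟩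
    exact ⟨x i₀, hx i₀, fun i => (abs_log_eq_abs_log_iff (hx i) (hx i₀)).1 (h i i₀)⟩
  · rintro ⟨r, hr, hxr⟩ i j
    rw [(abs_log_eq_abs_log_iff (hx i) hr).2 (hxr i), (abs_log_eq_abs_log_iff (hx j) hr).2 (hxr j)]

theorem log_prod_max_one {ι : Type*} (s : Finset ι) {x : ι → ℝ} (hx : ∀ i ∈ s, 0 ≤ x i) :
    log (∏ i ∈ s, max 1 (x i)) = 2⁻¹ * (∑ i ∈ s, log (x i) + ∑ i ∈ s, |log (x i)|) := by
  rw [log_prod fun i _ => by positivity, ← sum_add_distrib, mul_sum]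
  exact sum_congr rfl fun i hi => by rw [half_mul_log_add_log_abs, posLog_eq_log_max_one (hx i hi)]

theorem stmt_1_general (n : ℕ) (a : Fin n → ℂ) (ha : ∏ i, a i = 1) :
    Real.sqrt (∑ i, 2 * (Real.log (‖a i‖)) ^ 2) =
      2 * Real.sqrt (2 / n) * Real.log (∏ i, max 1 (‖a i‖)) ↔
    ∃ r : ℝ, 0 < r ∧ ∀ i, ‖a i‖ = r ∨ ‖a i‖ = r⁻¹ := by
  have ha₀ : ∀ i, 0 < ‖a i‖ := fun i =>
    norm_pos_iff.2 (prod_ne_zero_iff.1 (ha ▸ one_ne_zero) i (mem_univ i))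
  have hlog : ∑ i, log ‖a i‖ = 0 := by
    rw [← log_prod fun i _ => (ha₀ i).ne', ← norm_prod, ha, norm_one, log_one]
  have hM : 2 * √(2 / n) * log (∏ i, max 1 ‖a i‖) = √(2 / n) * ∑ i, |log ‖a i‖| := by
    rw [log_prod_max_one _ fun i _ => (ha₀ i).le, hlog]
    ring
  have hℓ := sqrt_sum_two_mul_sq_eq_iff fun i => log ‖a i‖
  rw [Fintype.card_fin] at hℓ
  rw [hM, hℓ, forall_abs_log_eq_iff_exists ha₀]

/-- Equality case of the lower Mahler–Length bound: `ℓ(p) = 2 √(2/n) log M(p)` iff there is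
`r > 0` such that every root modulus equals `r` or `r⁻¹`. -/
theorem stmt_1 (n : ℕ) (hn : 2 ≤ n) (a : Fin n → ℂ) (ha : ∏ i, a i = 1) :
    Real.sqrt (∑ i, 2 * (Real.log (‖a i‖)) ^ 2) =
      2 * Real.sqrt (2 / n) * Real.log (∏ i, max 1 (‖a i‖)) ↔
    ∃ r : ℝ, 0 < r ∧ ∀ i, ‖a i‖ = r ∨ ‖a i‖ = r⁻¹ :=
  stmt_1_general n a ha
end

section
/- Let n ≥ 2 and let p(X) = ∏_{i=1}^n (X − a_i) be a monic polynomial with real coefficients whose complex roots a_1, …, a_n satisfy ∏_{i=1}^n a_i = 1. Suppose ℓ(p) = 2·log(M(p)) and |a_i| ≠ 1 for at least one index i. Then there exists a real number α > 1 such that the multiset of moduli {|a_1|, …, |a_n|} consists of α, α^{-1}, and (n−2) copies of 1; moreover either α or −α occurs among the roots a_i. -/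
/-!
Write `Lᵢ = log |aᵢ|`. Since `∏ aᵢ = 1` we have `∑ Lᵢ = 0`, hence `2 log M(p) = ∑ |Lᵢ|`, and the
hypothesis reads `(∑ |Lᵢ|)² = 2 ∑ Lᵢ²`. Splitting `L` into its positive part `x` and negative
part `y`, both of total mass `P = ∑ |Lᵢ| / 2`, this says `∑ xᵢ² + ∑ yᵢ² = 2P²`; as
`∑ xᵢ² ≤ (∑ xᵢ)² = P²` and likewise for `y`, both inequalities are equalities, which forces `x`
and `y` to be supported on one index each. So exactly one root has modulus `α > 1`, one has
modulus `α⁻¹` and the rest lie on the unit circle. Real coefficients make the roots closed under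
conjugation, and the conjugate of the unique root of modulus `α` is again that root, so it is real.
-/

open Finset Polynomial ComplexConjugate

section SumOfSquares

variable {ι : Type*}

lemma mul_eq_zero_of_sq_sum_eq_sum_sq {s : Finset ι} {x : ι → ℝ} (hx : ∀ i ∈ s, 0 ≤ x i)
    (h : (∑ i ∈ s, x i) ^ 2 = ∑ i ∈ s, x i ^ 2) {i j : ι} (hi : i ∈ s) (hj : j ∈ s)
    (hij : i ≠ j) : x i * x j = 0 := by
  classical
  have hterm : ∀ k ∈ s, 0 ≤ x k * (∑ l ∈ s, x l - x k) := fun k hk =>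
    mul_nonneg (hx k hk) (sub_nonneg.2 (single_le_sum hx hk))
  have hzero : ∑ k ∈ s, x k * (∑ l ∈ s, x l - x k) = 0 := by
    simp only [mul_sub, sum_sub_distrib, ← sum_mul, ← sq, h, sub_self]
  have hi0 := (sum_eq_zero_iff_of_nonneg hterm).1 hzero i hi
  have hpair : x i + x j ≤ ∑ l ∈ s, x l := by
    rw [← sum_pair hij]
    exact sum_le_sum_of_subset_of_nonneg (by simp [insert_subset_iff, hi, hj])
      fun k hk _ => hx k hk
  have hle : x i * x j ≤ x i * (∑ l ∈ s, x l - x i) :=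
    mul_le_mul_of_nonneg_left (by linarith) (hx i hi)
  linarith [mul_nonneg (hx i hi) (hx j hj)]

variable [Fintype ι] {L : ι → ℝ}

lemma sum_abs_eq_two_mul_sum_max_zero (hsum : ∑ i, L i = 0) :
    ∑ i, |L i| = 2 * ∑ i, max 0 (L i) := by
  have habs : ∀ t : ℝ, |t| = 2 * max 0 t - t := fun t => by
    rcases le_total 0 t with h | h
    · rw [abs_of_nonneg h, max_eq_right h]; ring
    · rw [abs_of_nonpos h, max_eq_left h]; ring
  simp only [habs, sum_sub_distrib, ← mul_sum, hsum, sub_zero]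

lemma eq_of_pos_of_sq_sum_abs_eq (hsum : ∑ i, L i = 0)
    (hsq : (∑ i, |L i|) ^ 2 = 2 * ∑ i, L i ^ 2) {i j : ι} (hi : 0 < L i) (hj : 0 < L j) :
    i = j := by
  set x := fun k => max 0 (L k)
  set y := fun k => max 0 (-L k)
  have hy : ∑ k, y k = ∑ k, x k := by
    have := sum_abs_eq_two_mul_sum_max_zero (L := -L) (by simp [hsum])
    simp only [Pi.neg_apply, abs_neg, sum_abs_eq_two_mul_sum_max_zero hsum] at this
    linarith
  have hsplit : ∑ k, L k ^ 2 = ∑ k, x k ^ 2 + ∑ k, y k ^ 2 := by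
    rw [← sum_add_distrib]
    refine sum_congr rfl fun k _ => ?_
    rcases le_total 0 (L k) with h | h
    · simp [x, y, max_eq_right h, max_eq_left (neg_nonpos.2 h)]
    · simp [x, y, max_eq_left h, max_eq_right (neg_nonneg.2 h)]
  have hx2 := sum_sq_le_sq_sum_of_nonneg (s := univ) (f := x) fun k _ => le_max_left _ _
  have hy2 := sum_sq_le_sq_sum_of_nonneg (s := univ) (f := y) fun k _ => le_max_left _ _
  have heq : (∑ k, x k) ^ 2 = ∑ k, x k ^ 2 := by
    rw [sum_abs_eq_two_mul_sum_max_zero hsum, hsplit] at hsq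
    rw [hy] at hy2
    linarith
  by_contra hij
  have := mul_eq_zero_of_sq_sum_eq_sum_sq (fun k _ => le_max_left _ _) heq
    (mem_univ i) (mem_univ j) hij
  simp only [max_eq_right hi.le, max_eq_right hj.le] at this
  exact (mul_pos hi hj).ne' this

lemma exists_pos_of_sum_eq_zero (hsum : ∑ i, L i = 0) (hne : ∃ i, L i ≠ 0) : ∃ i, 0 < L i := by
  by_contra! hle
  obtain ⟨i, hi⟩ := hne
  exact hi ((sum_eq_zero_iff_of_nonpos fun k _ => hle k).1 hsum i (mem_univ i))

lemma exists_eq_neg_of_sq_sum_abs_eq (hsum : ∑ i, L i = 0)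
    (hsq : (∑ i, |L i|) ^ 2 = 2 * ∑ i, L i ^ 2) (hne : ∃ i, L i ≠ 0) :
    ∃ j₀ j₁, j₀ ≠ j₁ ∧ 0 < L j₀ ∧ L j₁ = -L j₀ ∧ ∀ k, k ≠ j₀ → k ≠ j₁ → L k = 0 := by
  have hsum' : ∑ i, (-L) i = 0 := by simp [hsum]
  have hsq' : (∑ i, |(-L) i|) ^ 2 = 2 * ∑ i, (-L) i ^ 2 := by simpa using hsq
  obtain ⟨j₀, h₀⟩ := exists_pos_of_sum_eq_zero hsum hne
  obtain ⟨j₁, h₁⟩ := exists_pos_of_sum_eq_zero hsum' (by simpa using hne)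
  have h₁ : L j₁ < 0 := by simpa using h₁
  have hj : j₀ ≠ j₁ := by rintro rfl; linarith
  have hzero : ∀ k, k ≠ j₀ → k ≠ j₁ → L k = 0 := by
    intro k hk₀ hk₁
    rcases lt_trichotomy (L k) 0 with hk | hk | hk
    · exact absurd (eq_of_pos_of_sq_sum_abs_eq hsum' hsq' (by simpa using hk)
        (by simpa using h₁)) hk₁
    · exact hk
    · exact absurd (eq_of_pos_of_sq_sum_abs_eq hsum hsq hk h₀) hk₀
  refine ⟨j₀, j₁, hj, h₀, ?_, hzero⟩
  rw [Fintype.sum_eq_add j₀ j₁ hj fun k hk => hzero k hk.1 hk.2] at hsum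
  linarith

end SumOfSquares

lemma Finset.univ_val_map_eq_cons_cons_replicate {ι β : Type*} [Fintype ι] (f : ι → β)
    {j₀ j₁ : ι} (hj : j₀ ≠ j₁) {c : β} (hc : ∀ k, k ≠ j₀ → k ≠ j₁ → f k = c) :
    univ.val.map f = f j₀ ::ₘ f j₁ ::ₘ Multiset.replicate (Fintype.card ι - 2) c := by
  classical
  set rest := (univ.erase j₀).erase j₁
  have huniv : (univ : Finset ι).val = j₀ ::ₘ j₁ ::ₘ rest.val := by
    rw [erase_val, erase_val,
      Multiset.cons_erase ((Multiset.mem_erase_of_ne hj.symm).2 (mem_univ_val j₁)),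
      Multiset.cons_erase (mem_univ_val j₀)]
  have hrest : rest.val.map f = Multiset.replicate (Fintype.card ι - 2) c := by
    refine Multiset.eq_replicate.2 ⟨?_, fun b hb => ?_⟩
    · rw [Multiset.card_map, card_val, card_erase_of_mem (mem_erase.2 ⟨hj.symm, mem_univ j₁⟩),
        card_erase_of_mem (mem_univ j₀), card_univ, Nat.sub_sub]
    · obtain ⟨k, hk, rfl⟩ := Multiset.mem_map.1 hb
      simp only [rest, mem_val, mem_erase] at hk
      exact hc k hk.2.1 hk.1
  rw [huniv, Multiset.map_cons, Multiset.map_cons, hrest]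

lemma exists_eq_conj_of_im_coeff_eq_zero {ι : Type*} [Fintype ι] (a : ι → ℂ)
    (hreal : ∀ j : ℕ, ((∏ i, (X - C (a i))).coeff j).im = 0) (j : ι) :
    ∃ k, a k = conj (a j) := by
  set p := ∏ i, (X - C (a i))
  have hp : p.map (starRingEnd ℂ) = p := by
    ext m
    rw [coeff_map]
    exact Complex.conj_eq_iff_im.2 (hreal m)
  have hroot : p.eval (a j) = 0 := by
    simp only [p, eval_prod]
    exact prod_eq_zero (mem_univ j) (by simp)
  have hconj : p.eval (conj (a j)) = 0 := by
    rw [← hp, eval_map_apply, hroot, map_zero]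
  simp only [p, eval_prod, prod_eq_zero_iff, eval_sub, eval_X, eval_C, sub_eq_zero] at hconj
  obtain ⟨k, -, hk⟩ := hconj
  exact ⟨k, hk.symm⟩

theorem stmt_3_general (n : ℕ) (a : Fin n → ℂ)
    (hreal : ∀ j : ℕ, ((∏ i, (Polynomial.X - Polynomial.C (a i))).coeff j).im = 0)
    (ha : ∏ i, a i = 1)
    (heq : Real.sqrt (∑ i, 2 * (Real.log (‖a i‖)) ^ 2) =
      2 * Real.log (∏ i, max 1 (‖a i‖)))
    (hne : ∃ i, ‖a i‖ ≠ 1) :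
    ∃ α : ℝ, 1 < α ∧
      Multiset.map (fun i => ‖a i‖) Finset.univ.val =
        α ::ₘ α⁻¹ ::ₘ Multiset.replicate (n - 2) 1 ∧
      ∃ i, a i = (α : ℂ) ∨ a i = (-α : ℂ) := by
  have hpos : ∀ i, 0 < ‖a i‖ := fun i => norm_pos_iff.2 fun h => by
    simp [prod_eq_zero (mem_univ i) h] at ha
  set L := fun i => Real.log ‖a i‖
  have hsum : ∑ i, L i = 0 := by
    rw [← Real.log_prod fun i _ => (hpos i).ne', ← Complex.norm_prod, ha, norm_one, Real.log_one]
  have hsq : (∑ i, |L i|) ^ 2 = 2 * ∑ i, L i ^ 2 := by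
    have hM : Real.log (∏ i, max 1 ‖a i‖) = ∑ i, max 0 (L i) := by
      rw [Real.log_prod fun i _ => by positivity]
      exact sum_congr rfl fun i _ => (Real.posLog_eq_log_max_one (hpos i).le).symm
    rw [sum_abs_eq_two_mul_sum_max_zero hsum, ← hM, ← heq, Real.sq_sqrt (by positivity), mul_sum]
  obtain ⟨j₀, j₁, hj, h₀, h₁, hzero⟩ := exists_eq_neg_of_sq_sum_abs_eq hsum hsq
    (hne.imp fun i hi => Real.log_ne_zero_of_pos_of_ne_one (hpos i) hi)
  refine ⟨‖a j₀‖, (Real.log_pos_iff (hpos j₀).le).1 h₀, ?_, ?_⟩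
  · have hinv : ‖a j₁‖ = ‖a j₀‖⁻¹ := Real.log_injOn_pos (hpos j₁) (inv_pos.2 (hpos j₀))
      (by rw [Real.log_inv]; exact h₁)
    rw [univ_val_map_eq_cons_cons_replicate _ hj fun k hk₀ hk₁ =>
      Real.eq_one_of_pos_of_log_eq_zero (hpos k) (hzero k hk₀ hk₁), hinv, Fintype.card_fin]
  · obtain ⟨k, hk⟩ := exists_eq_conj_of_im_coeff_eq_zero a hreal j₀
    have hkj : k = j₀ := eq_of_pos_of_sq_sum_abs_eq hsum hsq (by simpa [L, hk] using h₀) h₀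
    obtain ⟨r, hr⟩ := Complex.conj_eq_iff_real.1 (hkj ▸ hk).symm
    refine ⟨j₀, ?_⟩
    rcases abs_choice r with h | h <;>
      simp [hr, Complex.norm_real, Real.norm_eq_abs, h]

/-- If `p(X) = ∏ (X - aᵢ)` has real coefficients, `∏ aᵢ = 1`, the upper Mahler–Length bound
is an equality, and some root has modulus `≠ 1`, then there is `α > 1` such that the multiset
of root moduli is `{α, α⁻¹, 1, …, 1}` and `α` or `-α` occurs among the roots. -/
theorem stmt_3 (n : ℕ) (hn : 2 ≤ n) (a : Fin n → ℂ)
    (hreal : ∀ j : ℕ, ((∏ i, (Polynomial.X - Polynomial.C (a i))).coeff j).im = 0)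
    (ha : ∏ i, a i = 1)
    (heq : Real.sqrt (∑ i, 2 * (Real.log (‖a i‖)) ^ 2) =
      2 * Real.log (∏ i, max 1 (‖a i‖)))
    (hne : ∃ i, ‖a i‖ ≠ 1) :
    ∃ α : ℝ, 1 < α ∧
      Multiset.map (fun i => ‖a i‖) Finset.univ.val =
        α ::ₘ α⁻¹ ::ₘ Multiset.replicate (n - 2) 1 ∧
      ∃ i, a i = (α : ℂ) ∨ a i = (-α : ℂ) :=
  stmt_3_general n a hreal ha heq hne
end

section
/- Let n ≥ 2 and let x be an n×n real matrix with det(x) = 1 that is diagonalizable over ℂ. Let a_1, …, a_n ∈ ℂ be the eigenvalues of x (the roots of its characteristic polynomial p_x counted with multiplicity) and set ℓ(x) = sqrt(Σ_{i=1}^n 2(log|a_i|)^2). Then 2·√(2/n)·log(M(p_x)) ≤ ℓ(x) ≤ 2·log(M(p_x)). -/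
/-!
Write `Lᵢ = log |aᵢ|`. The eigenvalues multiply to `det x = 1`, so `∑ Lᵢ = 0`: the positive and
negative parts of the `Lᵢ` have the same total `P = log M(p_x)`, hence `∑ |Lᵢ| = 2P`.
Cauchy–Schwarz, `(∑ |Lᵢ|)² ≤ n ∑ Lᵢ²`, gives the lower bound, and
`∑ Lᵢ² = ∑ (Lᵢ⁺)² + ∑ (Lᵢ⁻)² ≤ (∑ Lᵢ⁺)² + (∑ Lᵢ⁻)² = 2P²` gives the upper bound.
-/
open Finset Polynomial

theorem Matrix.det_eq_prod_of_charpoly_eq_prod_X_sub_C {R ι : Type*} [CommRing R] [Fintype ι]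
    [DecidableEq ι] (A : Matrix ι ι R) (a : ι → R) (h : A.charpoly = ∏ i, (X - C (a i))) :
    A.det = ∏ i, a i := by
  rw [A.det_eq_sign_charpoly_coeff, h, coeff_zero_prod]
  simp only [coeff_sub, coeff_X_zero, coeff_C_zero, zero_sub, prod_neg, card_univ, ← mul_assoc,
    ← mul_pow, neg_one_mul, neg_neg, one_pow, one_mul]

theorem Real.log_max_one_eq_posPart {t : ℝ} (ht : 0 ≤ t) :
    Real.log (max 1 t) = (Real.log t)⁺ := by
  rcases le_total 1 t with h | h
  · rw [max_eq_right h, posPart_of_nonneg (Real.log_nonneg h)]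
  · rw [max_eq_left h, Real.log_one, posPart_eq_zero.2 (Real.log_nonpos ht h)]

theorem Real.sq_eq_sq_posPart_add_sq_negPart (r : ℝ) : r ^ 2 = r⁺ ^ 2 + r⁻ ^ 2 := by
  rcases le_total 0 r with h | h
  · simp [posPart_of_nonneg h, negPart_eq_zero.2 h]
  · simp [posPart_eq_zero.2 h, negPart_of_nonpos h]

section ZeroSum

variable {ι : Type*} [Fintype ι] {L : ι → ℝ}

theorem sum_negPart_eq_sum_posPart_of_sum_eq_zero (hL : ∑ i, L i = 0) :
    ∑ i, (L i)⁻ = ∑ i, (L i)⁺ := by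
  have : ∑ i, ((L i)⁺ - (L i)⁻) = 0 := by simpa only [posPart_sub_negPart] using hL
  rw [sum_sub_distrib] at this
  linarith

theorem sum_abs_eq_two_mul_sum_posPart_of_sum_eq_zero (hL : ∑ i, L i = 0) :
    ∑ i, |L i| = 2 * ∑ i, (L i)⁺ := by
  simp only [← posPart_add_negPart, sum_add_distrib, sum_negPart_eq_sum_posPart_of_sum_eq_zero hL]
  ring

theorem sum_sq_le_two_mul_sq_sum_posPart_of_sum_eq_zero (hL : ∑ i, L i = 0) :
    ∑ i, L i ^ 2 ≤ 2 * (∑ i, (L i)⁺) ^ 2 := by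
  have hpos : ∑ i, (L i)⁺ ^ 2 ≤ (∑ i, (L i)⁺) ^ 2 :=
    sum_sq_le_sq_sum_of_nonneg fun i _ => posPart_nonneg _
  have hneg : ∑ i, (L i)⁻ ^ 2 ≤ (∑ i, (L i)⁺) ^ 2 := by
    rw [← sum_negPart_eq_sum_posPart_of_sum_eq_zero hL]
    exact sum_sq_le_sq_sum_of_nonneg fun i _ => negPart_nonneg _
  simp only [Real.sq_eq_sq_posPart_add_sq_negPart (L _), sum_add_distrib]
  linarith

theorem two_mul_sqrt_two_div_card_mul_sum_posPart_le_of_sum_eq_zero (hL : ∑ i, L i = 0) :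
    2 * √(2 / Fintype.card ι) * ∑ i, (L i)⁺ ≤ √(∑ i, 2 * L i ^ 2) := by
  have hP : 0 ≤ ∑ i, (L i)⁺ := sum_nonneg fun i _ => posPart_nonneg _
  have hcs : (2 * ∑ i, (L i)⁺) ^ 2 ≤ Fintype.card ι * ∑ i, L i ^ 2 := by
    simpa [← sum_abs_eq_two_mul_sum_posPart_of_sum_eq_zero hL, sq_abs]
      using sq_sum_le_card_mul_sum_sq (s := univ) (f := fun i => |L i|)
  -- an inequality rather than an equation, since `2 / 0 = 0` when `ι` is empty
  have hcard : 2 / (Fintype.card ι : ℝ) * Fintype.card ι ≤ 2 := by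
    rcases (Fintype.card ι).eq_zero_or_pos with h | h
    · simp [h]
    · rw [div_mul_cancel₀ _ (by positivity)]
  rw [mul_comm 2, mul_assoc, ← Real.sqrt_sq (by positivity : 0 ≤ 2 * ∑ i, (L i)⁺),
    ← Real.sqrt_mul (by positivity), ← mul_sum]
  refine Real.sqrt_le_sqrt ?_
  calc 2 / (Fintype.card ι : ℝ) * (2 * ∑ i, (L i)⁺) ^ 2
      ≤ 2 / Fintype.card ι * (Fintype.card ι * ∑ i, L i ^ 2) := by gcongr
    _ = 2 / Fintype.card ι * Fintype.card ι * ∑ i, L i ^ 2 := by ring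
    _ ≤ 2 * ∑ i, L i ^ 2 := by gcongr

theorem sqrt_sum_two_mul_sq_le_two_mul_sum_posPart_of_sum_eq_zero (hL : ∑ i, L i = 0) :
    √(∑ i, 2 * L i ^ 2) ≤ 2 * ∑ i, (L i)⁺ := by
  have hP : 0 ≤ ∑ i, (L i)⁺ := sum_nonneg fun i _ => posPart_nonneg _
  rw [Real.sqrt_le_left (by positivity), ← mul_sum]
  nlinarith [sum_sq_le_two_mul_sq_sum_posPart_of_sum_eq_zero hL]

end ZeroSum

theorem sum_log_norm_eq_zero_of_prod_eq_one {𝕜 ι : Type*} [NormedField 𝕜] [Fintype ι]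
    {a : ι → 𝕜} (ha : ∏ i, a i = 1) : ∑ i, Real.log ‖a i‖ = 0 := by
  have hne : ∀ i ∈ univ, ‖a i‖ ≠ 0 := fun i _ =>
    norm_ne_zero_iff.2 <| prod_ne_zero_iff.1 (ha ▸ one_ne_zero) i (mem_univ i)
  rw [← Real.log_prod hne, ← norm_prod, ha, norm_one, Real.log_one]

theorem log_prod_max_one_norm_eq_sum_posPart {E ι : Type*} [SeminormedAddCommGroup E] [Fintype ι]
    (a : ι → E) : Real.log (∏ i, max 1 ‖a i‖) = ∑ i, (Real.log ‖a i‖)⁺ := by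
  rw [Real.log_prod fun i _ => by positivity]
  exact sum_congr rfl fun i _ => Real.log_max_one_eq_posPart (norm_nonneg _)

theorem stmt_4_general (n : ℕ) (x : Matrix (Fin n) (Fin n) ℝ) (hdet : x.det = 1)
    (a : Fin n → ℂ)
    (ha : (x.map Complex.ofReal).charpoly = ∏ i, (Polynomial.X - Polynomial.C (a i))) :
    2 * Real.sqrt (2 / n) * Real.log (∏ i, max 1 (‖a i‖)) ≤
      Real.sqrt (∑ i, 2 * (Real.log (‖a i‖)) ^ 2) ∧
    Real.sqrt (∑ i, 2 * (Real.log (‖a i‖)) ^ 2) ≤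
      2 * Real.log (∏ i, max 1 (‖a i‖)) := by
  have hprod : ∏ i, a i = 1 := by
    rw [← Matrix.det_eq_prod_of_charpoly_eq_prod_X_sub_C _ a ha,
      ← Complex.ofRealHom.map_one, ← hdet, Complex.ofRealHom.map_det]
    rfl
  have hL := sum_log_norm_eq_zero_of_prod_eq_one hprod
  rw [log_prod_max_one_norm_eq_sum_posPart]
  refine ⟨?_, sqrt_sum_two_mul_sq_le_two_mul_sum_posPart_of_sum_eq_zero hL⟩
  simpa only [Fintype.card_fin] using
    two_mul_sqrt_two_div_card_mul_sum_posPart_le_of_sum_eq_zero hL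

/-- **Mahler–Length bounds for matrices.** If `x ∈ SL_n(ℝ)` is diagonalizable over `ℂ`
(semisimple) with eigenvalues `a₁, …, aₙ` (the roots of its characteristic polynomial,
with multiplicity), then `2 √(2/n) log M(p_x) ≤ ℓ(x) ≤ 2 log M(p_x)` where
`ℓ(x) = √(∑ 2 (log |aᵢ|)²)` and `M(p_x) = ∏ max 1 |aᵢ|`. -/
theorem stmt_4 (n : ℕ) (hn : 2 ≤ n) (x : Matrix (Fin n) (Fin n) ℝ) (hdet : x.det = 1)
    (hss : ∃ (P : Matrix (Fin n) (Fin n) ℂ) (d : Fin n → ℂ),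
      IsUnit P ∧ x.map Complex.ofReal = P * Matrix.diagonal d * P⁻¹)
    (a : Fin n → ℂ)
    (ha : (x.map Complex.ofReal).charpoly = ∏ i, (Polynomial.X - Polynomial.C (a i))) :
    2 * Real.sqrt (2 / n) * Real.log (∏ i, max 1 (‖a i‖)) ≤
      Real.sqrt (∑ i, 2 * (Real.log (‖a i‖)) ^ 2) ∧
    Real.sqrt (∑ i, 2 * (Real.log (‖a i‖)) ^ 2) ≤
      2 * Real.log (∏ i, max 1 (‖a i‖)) :=
  stmt_4_general n x hdet a ha
end

section
/- Let n ≥ 2 and let a_1, …, a_n be complex numbers with ∏_{i=1}^n a_i = 1, and let p(X) = ∏_{i=1}^n (X − a_i). Define the discriminant disc(p) = ∏_{1 ≤ i < j ≤ n} (a_i − a_j)^2. Then (1/(n−1))·√(2/n)·max{0, log|n^{−n}·disc(p)|} ≤ ℓ(p). -/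
/-!
Up to sign, `disc(p)` is the square of the Vandermonde determinant of the roots. By Hadamard's
inequality (proved by normalising the rows and applying AM-GM to the eigenvalues of the Gram
matrix), `|disc(p)| ≤ nⁿ ∏ max(1, |aᵢ|)^(2(n-1))`, i.e.
`log⁺ |n⁻ⁿ disc(p)| ≤ 2(n-1) ∑ log⁺ |aᵢ|`. As `∏ aᵢ = 1`, the numbers `tᵢ = log |aᵢ|` sum to zero,
so `∑ log⁺ |aᵢ| = ½ ∑ |tᵢ| ≤ ½ √n ‖t‖₂` by Cauchy–Schwarz, while `ℓ(p) = √2 ‖t‖₂`.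
-/

open Finset Real Matrix
open scoped ComplexOrder

theorem Real.prod_le_sum_div_card_pow {ι : Type*} (s : Finset ι) (z : ι → ℝ)
    (hz : ∀ i ∈ s, 0 ≤ z i) : ∏ i ∈ s, z i ≤ ((∑ i ∈ s, z i) / #s) ^ #s := by
  rcases s.eq_empty_or_nonempty with rfl | hs
  · simp
  have hcard : (#s : ℝ) ≠ 0 := by exact_mod_cast hs.card_pos.ne'
  have amgm := geom_mean_le_arith_mean_weighted s (fun _ => (#s : ℝ)⁻¹) z
    (fun _ _ => by positivity) (by simp [hcard]) hz
  rw [← mul_sum, inv_mul_eq_div, finsetProd_rpow s z hz] at amgm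
  calc ∏ i ∈ s, z i = ((∏ i ∈ s, z i) ^ (#s : ℝ)⁻¹) ^ #s := by
        rw [← rpow_natCast, ← rpow_mul (prod_nonneg hz), inv_mul_cancel₀ hcard, rpow_one]
    _ ≤ _ := pow_le_pow_left₀ (rpow_nonneg (prod_nonneg hz) _) amgm _

namespace Matrix

variable {ι 𝕜 : Type*} [Fintype ι] [DecidableEq ι] [RCLike 𝕜]

theorem PosSemidef.re_det_le_re_trace_div_card_pow {A : Matrix ι ι 𝕜} (hA : A.PosSemidef) :
    RCLike.re A.det ≤ (RCLike.re A.trace / Fintype.card ι) ^ Fintype.card ι := by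
  rw [hA.isHermitian.det_eq_prod_eigenvalues, hA.isHermitian.trace_eq_sum_eigenvalues,
    ← RCLike.ofReal_prod, ← RCLike.ofReal_sum, RCLike.ofReal_re, RCLike.ofReal_re]
  exact Real.prod_le_sum_div_card_pow univ _ fun i _ => hA.eigenvalues_nonneg i

theorem norm_det_sq_le_one_of_sum_norm_sq_eq_one {B : Matrix ι ι 𝕜}
    (hB : ∀ i, ∑ j, ‖B i j‖ ^ 2 = 1) : ‖B.det‖ ^ 2 ≤ 1 := by
  have hdet : (B * Bᴴ).det = ((‖B.det‖ ^ 2 : ℝ) : 𝕜) := by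
    rw [det_mul, det_conjTranspose, RCLike.star_def, RCLike.mul_conj, RCLike.ofReal_pow]
  have htrace : (B * Bᴴ).trace = ((Fintype.card ι : ℝ) : 𝕜) := by
    simp_rw [trace, diag_apply, mul_apply, conjTranspose_apply, RCLike.star_def,
      RCLike.mul_conj, ← RCLike.ofReal_pow, ← RCLike.ofReal_sum, hB]
    simp
  have key := (posSemidef_self_mul_conjTranspose B).re_det_le_re_trace_div_card_pow
  rw [hdet, htrace, RCLike.ofReal_re, RCLike.ofReal_re] at key
  exact key.trans (pow_le_one₀ (by positivity) (div_self_le_one _))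

theorem norm_det_sq_le_prod_sum_norm_sq (A : Matrix ι ι 𝕜) :
    ‖A.det‖ ^ 2 ≤ ∏ i, ∑ j, ‖A i j‖ ^ 2 := by
  set s : ι → ℝ := fun i => ∑ j, ‖A i j‖ ^ 2
  have hs : ∀ i, 0 ≤ s i := fun i => sum_nonneg fun j _ => sq_nonneg _
  by_cases hzero : ∃ i, s i = 0
  · obtain ⟨i, hi⟩ := hzero
    have hrow : ∀ j, A i j = 0 := fun j => by
      simpa using (sum_eq_zero_iff_of_nonneg fun j _ => sq_nonneg ‖A i j‖).mp hi j (mem_univ j)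
    rw [det_eq_zero_of_row_eq_zero i hrow]
    simpa using prod_nonneg fun i _ => hs i
  push Not at hzero
  set d : ι → 𝕜 := fun i => ((√(s i))⁻¹ : ℝ)
  have hd : ∀ i, ‖d i‖ ^ 2 = (s i)⁻¹ := fun i => by
    simp [d, inv_pow, sq_sqrt (hs i)]
  have hnormalized : ∀ i, ∑ j, ‖(diagonal d * A) i j‖ ^ 2 = 1 := fun i => by
    simp_rw [diagonal_mul, norm_mul, mul_pow, hd, ← mul_sum]
    exact inv_mul_cancel₀ (hzero i)
  have hprod : 0 < ∏ i, s i := prod_pos fun i _ => (hs i).lt_of_ne' (hzero i)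
  have key := norm_det_sq_le_one_of_sum_norm_sq_eq_one hnormalized
  rwa [det_mul, det_diagonal, norm_mul, mul_pow, norm_prod, ← prod_pow, prod_congr rfl
    fun i _ => hd i, prod_inv_distrib, inv_mul_le_iff₀ hprod, mul_one] at key

end Matrix

theorem prod_sub_sq_eq_det_vandermonde_sq {R : Type*} [CommRing R] {n : ℕ} (a : Fin n → R) :
    ∏ ij ∈ univ.filter (fun ij : Fin n × Fin n => ij.1 < ij.2), (a ij.1 - a ij.2) ^ 2 =
      (vandermonde a).det ^ 2 := by
  rw [det_vandermonde, ← prod_pow, prod_finset_product _ univ (fun i => Ioi i) (by simp)]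
  simp_rw [← prod_pow, sub_sq_comm]

theorem sum_pow_sq_le_card_mul_max_one_pow {r : ℝ} (hr : 0 ≤ r) (n : ℕ) :
    ∑ j : Fin n, (r ^ (j : ℕ)) ^ 2 ≤ n * max 1 r ^ (2 * (n - 1)) := by
  have hterm : ∀ j : Fin n, (r ^ (j : ℕ)) ^ 2 ≤ max 1 r ^ (2 * (n - 1)) := fun j => by
    rw [← pow_mul]
    calc r ^ ((j : ℕ) * 2) ≤ max 1 r ^ ((j : ℕ) * 2) :=
          pow_le_pow_left₀ hr (le_max_right _ _) _
      _ ≤ max 1 r ^ (2 * (n - 1)) := pow_le_pow_right₀ (le_max_left _ _) (by omega)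
  simpa using sum_le_card_nsmul univ _ _ fun j _ => hterm j

theorem norm_det_vandermonde_sq_le {𝕜 : Type*} [RCLike 𝕜] {n : ℕ} (a : Fin n → 𝕜) :
    ‖(vandermonde a).det‖ ^ 2 ≤ (n : ℝ) ^ n * ∏ i, max 1 ‖a i‖ ^ (2 * (n - 1)) := by
  calc ‖(vandermonde a).det‖ ^ 2 ≤ ∏ i, ∑ j, ‖vandermonde a i j‖ ^ 2 :=
        norm_det_sq_le_prod_sum_norm_sq _
    _ ≤ ∏ i, ((n : ℝ) * max 1 ‖a i‖ ^ (2 * (n - 1))) := by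
        gcongr with i
        simpa [vandermonde_apply] using sum_pow_sq_le_card_mul_max_one_pow (norm_nonneg (a i)) n
    _ = (n : ℝ) ^ n * ∏ i, max 1 ‖a i‖ ^ (2 * (n - 1)) := by simp [prod_mul_distrib]

theorem posLog_norm_prod_sub_sq_div_le {𝕜 : Type*} [RCLike 𝕜] {n : ℕ} (a : Fin n → 𝕜) :
    log⁺ (‖∏ ij ∈ univ.filter (fun ij : Fin n × Fin n => ij.1 < ij.2), (a ij.1 - a ij.2) ^ 2‖ /
      (n : ℝ) ^ n) ≤ (2 * (n - 1) : ℕ) * ∑ i, log⁺ ‖a i‖ := by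
  have hposLog : ∀ i, log⁺ (max 1 ‖a i‖) = log⁺ ‖a i‖ := fun i => by
    rw [posLog_eq_log_max_one (norm_nonneg _), posLog_eq_log]
    exact (le_max_left _ _).trans (le_abs_self _)
  have hbound : ‖∏ ij ∈ univ.filter (fun ij : Fin n × Fin n => ij.1 < ij.2),
      (a ij.1 - a ij.2) ^ 2‖ / (n : ℝ) ^ n ≤ ∏ i, max 1 ‖a i‖ ^ (2 * (n - 1)) := by
    rw [prod_sub_sq_eq_det_vandermonde_sq, norm_pow]
    exact div_le_of_le_mul₀ (by positivity) (by positivity)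
      ((norm_det_vandermonde_sq_le a).trans_eq (mul_comm _ _))
  calc _ ≤ log⁺ (∏ i, max 1 ‖a i‖ ^ (2 * (n - 1))) := posLog_le_posLog (by positivity) hbound
    _ ≤ ∑ i, log⁺ (max 1 ‖a i‖ ^ (2 * (n - 1))) := posLog_prod _ _
    _ = (2 * (n - 1) : ℕ) * ∑ i, log⁺ ‖a i‖ := by simp_rw [posLog_pow, hposLog, ← mul_sum]

theorem Real.two_mul_sum_posLog_le_sqrt {ι : Type*} (s : Finset ι) (x : ι → ℝ)
    (hx : ∑ i ∈ s, log (x i) = 0) :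
    2 * ∑ i ∈ s, log⁺ (x i) ≤ √(#s * ∑ i ∈ s, log (x i) ^ 2) := by
  have habs : 2 * ∑ i ∈ s, log⁺ (x i) = ∑ i ∈ s, |log (x i)| := by
    simp_rw [← half_mul_log_add_log_abs, ← mul_sum, sum_add_distrib, hx]
    ring
  rw [habs]
  refine le_sqrt_of_sq_le ?_
  simpa only [sq_abs] using sq_sum_le_card_mul_sum_sq (s := s) (f := fun i => |log (x i)|)

/-- Discriminant lower bound for the translation length: with
`disc(p) = ∏_{i<j} (aᵢ - aⱼ)²` and `∏ aᵢ = 1`,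
`(1/(n-1)) √(2/n) max(0, log |n⁻ⁿ disc(p)|) ≤ ℓ(p)`. -/
theorem stmt_11 (n : ℕ) (hn : 2 ≤ n) (a : Fin n → ℂ) (ha : ∏ i, a i = 1) :
    (1 / ((n : ℝ) - 1)) * Real.sqrt (2 / n) *
      max 0 (Real.log (‖
        (∏ ij ∈ Finset.univ.filter (fun ij : Fin n × Fin n => ij.1 < ij.2),
          (a ij.1 - a ij.2) ^ 2)‖ / (n : ℝ) ^ n)) ≤
      Real.sqrt (∑ i, 2 * (Real.log ‖a i‖) ^ 2) := by
  have hne : ∀ i, a i ≠ 0 := fun i hi => by simp [prod_eq_zero (mem_univ i) hi] at ha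
  have hlog : ∑ i, log ‖a i‖ = 0 := by
    rw [← log_prod fun i _ => norm_ne_zero_iff.mpr (hne i), ← norm_prod, ha, norm_one, log_one]
  have hn1 : (0 : ℝ) < n - 1 := by
    have : (2 : ℝ) ≤ n := by exact_mod_cast hn
    linarith
  have hcast : ((2 * (n - 1) : ℕ) : ℝ) = 2 * ((n : ℝ) - 1) := by
    push_cast [Nat.cast_sub (by omega : 1 ≤ n)]
    ring
  calc _ ≤ 1 / ((n : ℝ) - 1) * √(2 / n) * ((2 * (n - 1) : ℕ) * ∑ i, log⁺ ‖a i‖) := by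
        gcongr
        exact posLog_norm_prod_sub_sq_div_le a
    _ = √(2 / n) * (2 * ∑ i, log⁺ ‖a i‖) := by
        rw [hcast]
        field_simp
    _ ≤ √(2 / n) * √(n * ∑ i, log ‖a i‖ ^ 2) := by
        gcongr
        simpa using two_mul_sum_posLog_le_sqrt univ (‖a ·‖) hlog
    _ = √(∑ i, 2 * log ‖a i‖ ^ 2) := by
        rw [← sqrt_mul (by positivity), ← mul_sum]
        congr 1
        field_simp
end

section
/- Let k be a number field of degree d over ℚ and let y be an m×m matrix with entries in k such that every coefficient of the characteristic polynomial of y is an algebraic integer (i.e. lies in the ring of integers of k). Regard k^m as a ℚ-vector space of dimension d·m and let T : k^m → k^m be the ℚ-linear endomorphism v ↦ y·v. Then the characteristic polynomial of T has integer coefficients, i.e. it is the image of a monic polynomial in ℤ[X]. -/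
/-!
`y` is a root of its characteristic polynomial, which has coefficients in `𝓞 k`; hence `y`, and
with it the `ℚ`-endomorphism `T = y ·` of `kᵐ`, is integral over `ℤ`. An endomorphism of a
finite-dimensional vector space over `Frac R`, `R` a PID, that is integral over `R` preserves a
lattice, namely the `R[T]`-span of a basis; a basis of that lattice is a basis of the whole
space in which `T` has a matrix with entries in `R`.
-/

open Polynomial Module Submodule

section Lattice

variable {R K V : Type*} [CommRing R] [Field K] [Algebra R K] [IsFractionRing R K]
  [AddCommGroup V] [Module K V] [Module R V] [IsScalarTower R K V]

variable (K) in
lemma Module.Basis.extendOfIsLattice_repr {ι : Type*} {M : Submodule R V} [IsLattice K M]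
    (b : Basis ι R M) (x : M) (i : ι) :
    (b.extendOfIsLattice K).repr x i = algebraMap R K (b.repr x i) := by
  let f : M →ₗ[R] K :=
    ((Finsupp.lapply i).comp (b.extendOfIsLattice K).repr.toLinearMap).restrictScalars R ∘ₗ
      M.subtype
  let g : M →ₗ[R] K := Algebra.linearMap R K ∘ₗ Finsupp.lapply i ∘ₗ b.repr.toLinearMap
  change f x = g x
  congr 1
  refine b.ext fun j => ?_
  have h := (b.extendOfIsLattice K).repr_self j
  rw [b.extendOfIsLattice_apply K] at h
  rcases eq_or_ne j i with rfl | hji <;> simp [f, g, *]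

lemma LinearMap.charpoly_eq_map_charpoly_restrict [FiniteDimensional K V] (T : V →ₗ[K] V)
    (M : Submodule R V) [IsLattice K M] [Module.Free R M] (hT : ∀ x ∈ M, T x ∈ M) :
    T.charpoly = ((T.restrictScalars R).restrict hT).charpoly.map (algebraMap R K) := by
  let b := Module.Free.chooseBasis R M
  rw [← T.charpoly_toMatrix (b.extendOfIsLattice K), ← LinearMap.charpoly_toMatrix _ b,
    ← Matrix.charpoly_map]
  congr 1
  ext i j
  simp only [LinearMap.toMatrix_apply, Matrix.map_apply, b.extendOfIsLattice_apply K]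
  exact b.extendOfIsLattice_repr K ⟨T (b j), hT _ (b j).2⟩ i

lemma LinearMap.exists_monic_map_eq_charpoly_of_isIntegral [IsDomain R] [IsPrincipalIdealRing R]
    [FiniteDimensional K V] {T : V →ₗ[K] V} (hT : IsIntegral R T) :
    ∃ q : R[X], q.Monic ∧ q.map (algebraMap R K) = T.charpoly := by
  have := Algebra.finite_adjoin_simple_of_isIntegral hT
  let N : Submodule (Algebra.adjoin R {T}) V := span _ (Set.range (Module.finBasis K V))
  have : Module.Finite (Algebra.adjoin R {T}) N :=
    Module.Finite.span_of_finite _ (Set.finite_range _)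
  have : Module.Finite R N := Module.Finite.trans (Algebra.adjoin R {T}) N
  let M : Submodule R V := N.restrictScalars R
  have : IsLattice K M := ⟨Module.Finite.iff_fg.mp this, by
    refine eq_top_iff.mpr ((Module.finBasis K V).span_eq.symm.le.trans (span_mono ?_))
    rintro _ ⟨i, rfl⟩
    exact subset_span ⟨i, rfl⟩⟩
  have hTM : ∀ x ∈ M, T x ∈ M := fun x hx =>
    N.smul_mem ⟨T, Algebra.self_mem_adjoin_singleton R T⟩ hx
  exact ⟨_, LinearMap.charpoly_monic _, (T.charpoly_eq_map_charpoly_restrict M hTM).symm⟩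

end Lattice

lemma Matrix.isIntegral_of_isIntegral_coeff_charpoly {R A n : Type*} [CommRing R] [CommRing A]
    [Algebra R A] [Fintype n] [DecidableEq n] {M : Matrix n n A}
    (h : ∀ j, IsIntegral R (M.charpoly.coeff j)) : IsIntegral R M := by
  obtain ⟨p, hp, -, hmonic⟩ := lifts_and_natDegree_eq_and_monic
    (f := algebraMap (integralClosure R A) A)
    (M.charpoly.lifts_iff_coeff_lifts.mpr fun j => ⟨⟨_, h j⟩, rfl⟩) M.charpoly_monic
  refine isIntegral_trans (A := integralClosure R A) M ⟨p, hmonic, ?_⟩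
  rw [← aeval_def, ← aeval_map_algebraMap A, hp, aeval_self_charpoly]

def Module.End.restrictScalarsRingHom (R : Type*) {S M : Type*} [Semiring R] [Semiring S]
    [AddCommMonoid M] [Module R M] [Module S M] [LinearMap.CompatibleSMul M M R S] :
    Module.End S M →+* Module.End R M where
  toFun f := f.restrictScalars R
  map_one' := rfl
  map_mul' _ _ := rfl
  map_zero' := rfl
  map_add' _ _ := rfl

theorem stmt_12_general (k : Type) [Field k] [NumberField k] (m : ℕ) (y : Matrix (Fin m) (Fin m) k)
    (hy : ∀ j : ℕ, IsIntegral ℤ (y.charpoly.coeff j)) :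
    ∃ q : Polynomial ℤ, q.Monic ∧
      q.map (Int.castRingHom ℚ) = ((Matrix.toLin' y).restrictScalars ℚ).charpoly := by
  have hT : IsIntegral ℤ ((Matrix.toLin' y).restrictScalars ℚ) :=
    (Matrix.isIntegral_of_isIntegral_coeff_charpoly hy).map
      ((Module.End.restrictScalarsRingHom ℚ (M := Fin m → k)).comp
        (Matrix.toLinAlgEquiv' : Matrix (Fin m) (Fin m) k ≃ₐ[k] _).toRingHom).toIntAlgHom
  simpa only [algebraMap_int_eq] using LinearMap.exists_monic_map_eq_charpoly_of_isIntegral hT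

/-- If `k` is a number field of degree `d` over `ℚ` and `y` is an `m × m` matrix over `k`
all of whose characteristic polynomial coefficients are algebraic integers, then the
characteristic polynomial of the `ℚ`-linear endomorphism `v ↦ y ⬝ v` of `kᵐ` is the image
of a monic polynomial with integer coefficients. -/
theorem stmt_12 (k : Type) [Field k] [NumberField k] (d m : ℕ)
    (hd : Module.finrank ℚ k = d) (y : Matrix (Fin m) (Fin m) k)
    (hy : ∀ j : ℕ, IsIntegral ℤ (y.charpoly.coeff j)) :
    ∃ q : Polynomial ℤ, q.Monic ∧
      q.map (Int.castRingHom ℚ) = ((Matrix.toLin' y).restrictScalars ℚ).charpoly :=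
  stmt_12_general k m y hy
end

section
/- Let k be a number field of degree d over ℚ and let y be an m×m matrix with entries in k, with characteristic polynomial p_y ∈ k[X]. Regard k^m as a ℚ-vector space of dimension d·m and let T : k^m → k^m be the ℚ-linear endomorphism v ↦ y·v, with characteristic polynomial p_T ∈ ℚ[X]. Then the image of p_T in ℂ[X] equals the product, over all d field embeddings σ : k → ℂ, of the polynomials obtained by applying σ to the coefficients of p_y; that is, p_T = ∏_{σ : k → ℂ} σ(p_y) in ℂ[X]. -/
open Matrix Polynomial

lemma aux_charpoly_blockDiagonal {o n R : Type*} [DecidableEq o] [Fintype o]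
    [DecidableEq n] [Fintype n] [CommRing R] (f : o → Matrix n n R) :
    (Matrix.blockDiagonal f).charpoly = ∏ a, (f a).charpoly := by
  have h : charmatrix (blockDiagonal f) = blockDiagonal (fun a => charmatrix (f a)) := by
    ext ⟨i, a⟩ ⟨j, c⟩
    by_cases hac : a = c <;> by_cases hij : i = j <;>
      simp [charmatrix_apply, blockDiagonal_apply, diagonal_apply, Prod.ext_iff, hac, hij]
  rw [Matrix.charpoly, h, det_blockDiagonal]
  rfl

lemma aux_charpoly_of_mul_eq {n R : Type*} [DecidableEq n] [Fintype n] [CommRing R] [IsDomain R]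
    (E A D : Matrix n n R) (hE : E.det ≠ 0) (h : E * A = D * E) : A.charpoly = D.charpoly := by
  have hm : E.map C * A.map C = D.map C * E.map C := by
    rw [← Matrix.map_mul, h, Matrix.map_mul]
  have h2 : E.map C * charmatrix A = charmatrix D * E.map C := by
    unfold charmatrix
    rw [mul_sub, sub_mul, RingHom.mapMatrix_apply, RingHom.mapMatrix_apply, hm,
      (scalar_commute (X : R[X]) (fun r => Commute.all _ _) (E.map C)).eq]
  have hd : (E.map C).det ≠ 0 := by
    have : (E.map C).det = C E.det := by
      rw [← RingHom.mapMatrix_apply, ← RingHom.map_det]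
    rw [this]
    simpa using hE
  have := congrArg Matrix.det h2
  rw [det_mul, det_mul] at this
  exact mul_left_cancel₀ hd (this.trans (mul_comm _ _))

/-- If `k` is a number field of degree `d` over `ℚ` and `y` is an `m × m` matrix over `k`
with characteristic polynomial `p_y ∈ k[X]`, then the characteristic polynomial of the
`ℚ`-linear endomorphism `v ↦ y ⬝ v` of `kᵐ`, viewed in `ℂ[X]`, equals the product over all
`d` embeddings `σ : k → ℂ` of the polynomials `σ(p_y)`. -/
theorem stmt_13 (k : Type) [Field k] [NumberField k] (d m : ℕ)
    (hd : Module.finrank ℚ k = d) (y : Matrix (Fin m) (Fin m) k) :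
    (((Matrix.toLin' y).restrictScalars ℚ).charpoly).map (algebraMap ℚ ℂ) =
      ∏ σ : (k →+* ℂ), y.charpoly.map σ := by
  classical
  set n := Module.finrank ℚ k with hn
  let b : Module.Basis (Fin n) ℚ k := Module.finBasis ℚ k
  let e : Fin n ≃ (k →+* ℂ) := Fintype.equivOfCardEq (by
    rw [Fintype.card_fin, NumberField.Embeddings.card k ℂ])
  let B : Module.Basis (Fin m × Fin n) ℚ (Fin m → k) :=
    (Pi.basis fun _ : Fin m => b).reindex (Equiv.sigmaEquivProd (Fin m) (Fin n))
  set T := (Matrix.toLin' y).restrictScalars ℚ with hT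
  set ι := algebraMap ℚ ℂ with hι
  set M := LinearMap.toMatrix B B T with hM
  have hchar : T.charpoly = M.charpoly := (LinearMap.charpoly_toMatrix T B).symm
  have hσι : ∀ (σ : k →+* ℂ) (q : ℚ), σ (algebraMap ℚ k q) = ι q := fun σ q =>
    (eq_ratCast (σ.comp (algebraMap ℚ k)) q).trans (eq_ratCast (algebraMap ℚ ℂ) q).symm
  have key : ∀ (σ : k →+* ℂ) (z : k), ∑ t, σ (b t) * ι (b.repr z t) = σ z := by
    intro σ z
    conv_rhs => rw [← b.sum_repr z]
    rw [map_sum]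
    refine Finset.sum_congr rfl fun t _ => ?_
    rw [Algebra.smul_def, _root_.map_mul, hσι, mul_comm]
  have hMapp : ∀ (i : Fin m) (c : Fin n) (j : Fin m) (a : Fin n),
      M (i, c) (j, a) = b.repr (y i j * b a) c := by
    intro i c j a
    rw [hM, LinearMap.toMatrix_apply]
    have hB : B (j, a) = Pi.single j (b a) := by
      simp [B, Module.Basis.reindex_apply]
    rw [hB]
    have hTs : T (Pi.single j (b a)) = fun l => y l j * b a := by
      funext l
      simp [hT, Matrix.toLin'_apply, Matrix.mulVec, dotProduct, Pi.single_apply, mul_ite]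
    rw [hTs]
    simp [B, Module.Basis.repr_reindex_apply]
  set E : Matrix (Fin m × Fin n) (Fin m × Fin n) ℂ :=
    Matrix.of (fun p q => if p.1 = q.1 then (e p.2) (b q.2) else 0) with hE
  set D : Matrix (Fin m × Fin n) (Fin m × Fin n) ℂ :=
    (Matrix.blockDiagonal (fun σ : (k →+* ℂ) => y.map σ)).reindex
      ((Equiv.refl (Fin m)).prodCongr e).symm ((Equiv.refl (Fin m)).prodCongr e).symm with hD
  have hDapp : ∀ (i : Fin m) (c : Fin n) (j : Fin m) (a : Fin n),
      D (i, c) (j, a) = if c = a then (e c) (y i j) else 0 := by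
    intro i c j a
    simp [hD, Matrix.reindex_apply, Matrix.blockDiagonal_apply, Equiv.symm_symm,
      EmbeddingLike.apply_eq_iff_eq]
  have hcomm : E * M.map ι = D * E := by
    ext ⟨i, c⟩ ⟨j, a⟩
    have hL : (E * M.map ι) (i, c) (j, a) = (e c) (y i j * b a) := by
      rw [Matrix.mul_apply, Fintype.sum_prod_type]
      rw [Finset.sum_eq_single_of_mem i (Finset.mem_univ i)]
      · rw [← key (e c) (y i j * b a)]
        refine Finset.sum_congr rfl fun t _ => ?_
        simp [hE, Matrix.map_apply, hMapp]
      · intro l _ hl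
        simp [hE, (Ne.symm hl)]
    have hR : (D * E) (i, c) (j, a) = (e c) (y i j) * (e c) (b a) := by
      rw [Matrix.mul_apply, Fintype.sum_prod_type]
      rw [Finset.sum_eq_single_of_mem j (Finset.mem_univ j)]
      · rw [Finset.sum_eq_single_of_mem c (Finset.mem_univ c)]
        · simp [hE, hDapp]
        · intro t _ ht
          simp [hDapp, Ne.symm ht]
      · intro l _ hl
        simp [hE, hl]
    rw [hL, hR, _root_.map_mul]
  have hEdet : E.det ≠ 0 := by
    let e' : Fin n ≃ (k →ₐ[ℚ] ℂ) := e.trans (RingHom.equivRatAlgHom k ℂ)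
    have hE0 : (Matrix.of fun (c a : Fin n) => (e c) (b a)) =
        (Algebra.embeddingsMatrixReindex ℚ ℂ ⇑b e')ᵀ := by
      ext c a
      simp only [Algebra.embeddingsMatrixReindex, Algebra.embeddingsMatrix,
        Matrix.reindex_apply, Matrix.submatrix_apply, Matrix.transpose_apply, Matrix.of_apply,
        Equiv.symm_symm, Equiv.refl_apply, e', Equiv.trans_apply]
      rfl
    have hsep : Algebra.IsSeparable ℚ k := inferInstance
    have htr := Algebra.traceMatrix_eq_embeddingsMatrixReindex_mul_trans ℚ ℂ ⇑b e'
    have htrdet : ((Algebra.traceMatrix ℚ ⇑b).map ι).det ≠ 0 := by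
      have h1 : ((Algebra.traceMatrix ℚ ⇑b).map ι).det = ι (Algebra.traceMatrix ℚ ⇑b).det := by
        rw [← RingHom.mapMatrix_apply, ← RingHom.map_det]
      rw [h1]
      simp only [ne_eq, _root_.map_eq_zero]
      rw [Algebra.traceMatrix_of_basis]
      exact det_traceForm_ne_zero b
    rw [htr, det_mul, det_transpose] at htrdet
    have hE0det : (Matrix.of fun (c a : Fin n) => (e c) (b a)).det ≠ 0 := by
      rw [hE0, det_transpose]
      exact fun hz => htrdet (by rw [hz, zero_mul])
    have hEeq : E = (Matrix.blockDiagonal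
        (fun _ : Fin m => Matrix.of fun (c a : Fin n) => (e c) (b a))).reindex
        (Equiv.prodComm (Fin n) (Fin m)) (Equiv.prodComm (Fin n) (Fin m)) := by
      ext ⟨i, c⟩ ⟨j, a⟩
      simp [hE, Matrix.reindex_apply, Matrix.blockDiagonal_apply]
    rw [hEeq, Matrix.det_reindex_self, det_blockDiagonal]
    exact Finset.prod_ne_zero_iff.mpr fun _ _ => hE0det
  have hstep : (M.map ι).charpoly = D.charpoly :=
    aux_charpoly_of_mul_eq E (M.map ι) D hEdet hcomm
  rw [hchar, ← Matrix.charpoly_map, hstep, hD, Matrix.charpoly_reindex,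
    aux_charpoly_blockDiagonal]
  exact Finset.prod_congr rfl fun σ _ => Matrix.charpoly_map y σ
end

section
/- Let k be a number field, let x be an n×n matrix with entries in k, and let e ≥ 1 be an integer. If every coefficient of the characteristic polynomial of x^e is an algebraic integer, then every coefficient of the characteristic polynomial of x is an algebraic integer. -/
open Polynomial Matrix

/-- Evaluating the characteristic polynomial gives a determinant. -/
lemma aux_charpoly_eval {R : Type*} [CommRing R] {n : Type*} [Fintype n] [DecidableEq n]
    (M : Matrix n n R) (r : R) :
    M.charpoly.eval r = (Matrix.scalar n r - M).det := by
  rw [Matrix.charpoly, eval_det, matPolyEquiv_charmatrix]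
  simp

/-- If `r` is a root of the charpoly of `M`, then `r ^ e` is a root of the charpoly of `M ^ e`. -/
lemma aux_root_pow {R : Type*} [CommRing R] {n : Type*} [Fintype n] [DecidableEq n]
    (M : Matrix n n R) (r : R) (e : ℕ) (hr : M.charpoly.eval r = 0) :
    (M ^ e).charpoly.eval (r ^ e) = 0 := by
  rw [aux_charpoly_eval] at hr ⊢
  have hc : Commute (Matrix.scalar n r) M :=
    Matrix.scalar_commute r (fun r' => Commute.all r r') M
  obtain ⟨c, hcc⟩ := hc.sub_dvd_pow_sub_pow e
  have : Matrix.scalar n (r ^ e) - M ^ e = (Matrix.scalar n r - M) * c := by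
    rw [← hcc, map_pow]
  rw [this, Matrix.det_mul, hr, zero_mul]

/-- A root of a monic polynomial all of whose coefficients are integral is integral. -/
lemma aux_root_integral {K : Type*} [CommRing K] {p : K[X]} (hm : p.Monic)
    (hc : ∀ j, IsIntegral ℤ (p.coeff j)) {z : K} (hz : p.eval z = 0) : IsIntegral ℤ z := by
  let S := integralClosure ℤ K
  have hsub : (↑p.coeffs : Set K) ⊆ ↑S.toSubring := by
    intro a ha
    obtain ⟨j, _, rfl⟩ := Polynomial.mem_coeffs_iff.mp ha
    exact hc j
  have h1 : IsIntegral S z := by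
    refine ⟨p.toSubring S.toSubring hsub, (p.monic_toSubring _ _).mpr hm, ?_⟩
    have hmt : (p.toSubring S.toSubring hsub).map S.toSubring.subtype = p := p.map_toSubring _ _
    have halg : (algebraMap S K : S →+* K) = S.toSubring.subtype := rfl
    rw [← Polynomial.eval_map, halg, hmt, hz]
  exact isIntegral_trans z h1

/-- Coefficients of a product of linear factors with integral roots are integral. -/
lemma aux_coeff_prod_integral {K : Type*} [CommRing K] (m : Multiset K)
    (hm : ∀ r ∈ m, IsIntegral ℤ r) (j : ℕ) :
    IsIntegral ℤ (((m.map fun r => (X : K[X]) - C r).prod).coeff j) := by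
  induction m using Multiset.induction generalizing j with
  | empty =>
    simp only [Multiset.map_zero, Multiset.prod_zero, Polynomial.coeff_one]
    split <;> [exact isIntegral_one; exact isIntegral_zero]
  | cons a s ih =>
    have ha : IsIntegral ℤ a := hm a (Multiset.mem_cons_self a s)
    have hs : ∀ r ∈ s, IsIntegral ℤ r := fun r hr => hm r (Multiset.mem_cons_of_mem hr)
    simp only [Multiset.map_cons, Multiset.prod_cons]
    rw [sub_mul, Polynomial.coeff_sub, Polynomial.coeff_C_mul]
    cases j with
    | zero =>
      have h0 : ((X : K[X]) * (s.map fun r => (X : K[X]) - C r).prod).coeff 0 = 0 := by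
        rw [Polynomial.coeff_zero_eq_eval_zero]; simp
      rw [h0]
      exact isIntegral_zero.sub (ha.mul (ih hs 0))
    | succ j =>
      rw [Polynomial.coeff_X_mul]
      exact (ih hs j).sub (ha.mul (ih hs (j + 1)))

set_option maxHeartbeats 1000000 in
/-- If every coefficient of the characteristic polynomial of `xᵉ` is an algebraic integer,
then so is every coefficient of the characteristic polynomial of `x`. -/
theorem stmt_15 (k : Type) [Field k] [NumberField k] (n e : ℕ) (he : 1 ≤ e)
    (x : Matrix (Fin n) (Fin n) k)
    (h : ∀ j : ℕ, IsIntegral ℤ ((x ^ e).charpoly.coeff j)) :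
    ∀ j : ℕ, IsIntegral ℤ (x.charpoly.coeff j) := by
  intro j
  set K := AlgebraicClosure k
  let f : k →ₐ[ℤ] K := IsScalarTower.toAlgHom ℤ k K
  let y : Matrix (Fin n) (Fin n) K := x.map (algebraMap k K)
  have hmapinj : Function.Injective f := f.toRingHom.injective
  rw [← isIntegral_algHom_iff f hmapinj]
  -- `f (x.charpoly.coeff j)` is the `j`-th coeff of `y.charpoly`
  have hcp : y.charpoly = x.charpoly.map (algebraMap k K) :=
    Matrix.charpoly_map x (algebraMap k K)
  have hfc : f (x.charpoly.coeff j) = y.charpoly.coeff j := by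
    rw [hcp, Polynomial.coeff_map]; rfl
  rw [hfc]
  -- every root of `y.charpoly` is integral
  have hroot : ∀ r ∈ y.charpoly.roots, IsIntegral ℤ r := by
    intro r hr
    have hev : y.charpoly.eval r = 0 := by
      have := Polynomial.isRoot_of_mem_roots hr
      exact this
    have hpow : (y ^ e).charpoly.eval (r ^ e) = 0 := aux_root_pow y r e hev
    have hye : (y ^ e) = (x ^ e).map (algebraMap k K) := by
      have := map_pow ((algebraMap k K).mapMatrix) x e
      simpa [RingHom.mapMatrix_apply] using this.symm
    have hcoeffs : ∀ i, IsIntegral ℤ ((y ^ e).charpoly.coeff i) := by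
      intro i
      rw [hye, Matrix.charpoly_map, Polynomial.coeff_map]
      exact (h i).map f
    have hre : IsIntegral ℤ (r ^ e) :=
      aux_root_integral ((y ^ e).charpoly_monic) hcoeffs hpow
    exact IsIntegral.of_pow (lt_of_lt_of_le one_pos he) hre
  -- `y.charpoly` splits into linear factors over the algebraic closure
  have hsplit : y.charpoly = (y.charpoly.roots.map fun r => (X : K[X]) - C r).prod := by
    have := Polynomial.Splits.eq_prod_roots_of_monic
      (IsAlgClosed.splits y.charpoly) y.charpoly_monic
    simpa using this
  rw [hsplit]
  exact aux_coeff_prod_integral _ hroot j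
end
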